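/- arXiv:1904.10155 — 2 statements merged into one kernel-verified Lean document; each statement's English description precedes it below -/
import Mathlib

section
/- Let d, m be positive integers with m ≤ d and let A ∈ ℝ^{d×d} be a symmetric positive semidefinite matrix (of arbitrary rank). Then the maximum of Tr(Wᵀ A W) over the FSPCA feasible set F(d,m,m) (i.e., sparsity level k = m) is attained and equals the sum of the m largest diagonal entries of A. -/
open Matrix

/-- The FSPCA feasible set: `Wᵀ W = I_m` and `W` has at most `k` nonzero rows. -/
def feasible (d m k : ℕ) (W : Matrix (Fin d) (Fin m) ℝ) : Prop :=
  Wᵀ * W = 1 ∧ {i | W i ≠ 0}.ncard ≤ k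

/-!
A `d × m` matrix `W` with orthonormal columns supported on a row set `S` restricts to an
`S × m` matrix `V` with `Vᵀ V = 1`, so `m ≤ #S`. When `#S = m` as well, `V` is square, hence
`V Vᵀ = 1` too, i.e. `W Wᵀ` is the coordinate projection onto `S`, and
`Tr(Wᵀ A W) = Tr(A W Wᵀ) = ∑_{i ∈ S} A i i`. Conversely the columns `e_i, i ∈ S`, realise every
such `S`. So for `k = m` the attainable values of `Tr(Wᵀ A W)` are exactly the sums of `m`
diagonal entries of `A`.
-/

open Finset

namespace Matrix

variable {ι κ R : Type*} [Fintype ι]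

lemma transpose_mul_self_submatrix_of_forall_notMem [NonUnitalNonAssocSemiring R]
    {W : Matrix ι κ R} {S : Finset ι} (hS : ∀ i ∉ S, W i = 0) :
    (W.submatrix ((↑) : S → ι) id)ᵀ * W.submatrix ((↑) : S → ι) id = Wᵀ * W := by
  ext a b
  simp only [mul_apply, transpose_apply, submatrix_apply, id_eq]
  rw [Finset.sum_coe_sort S (fun i => W i a * W i b)]
  exact Finset.sum_subset (subset_univ S) fun i _ hi => by simp [hS i hi]

lemma card_le_card_of_transpose_mul_self_eq_one [Fintype κ] [DecidableEq κ] [CommRing R]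
    [Nontrivial R] {W : Matrix ι κ R} (hW : Wᵀ * W = 1) {S : Finset ι}
    (hS : ∀ i ∉ S, W i = 0) : Fintype.card κ ≤ #S := by
  set V := W.submatrix ((↑) : S → ι) id
  calc Fintype.card κ = (Vᵀ * V).rank := by
        rw [transpose_mul_self_submatrix_of_forall_notMem hS, hW, rank_one]
    _ ≤ V.rank := rank_mul_le_right _ _
    _ ≤ Fintype.card S := rank_le_card_height V
    _ = #S := Fintype.card_coe S

lemma mul_transpose_self_eq_diagonal [Fintype κ] [DecidableEq κ] [DecidableEq ι] [CommRing R]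
    [Nontrivial R] {W : Matrix ι κ R} (hW : Wᵀ * W = 1) {S : Finset ι}
    (hS : ∀ i ∉ S, W i = 0) (hcard : #S = Fintype.card κ) :
    W * Wᵀ = diagonal fun i => if i ∈ S then 1 else 0 := by
  set V := W.submatrix ((↑) : S → ι) id
  have hV : V * Vᵀ = 1 :=
    (mul_eq_one_comm_of_card_eq _ _ _ (by rwa [Fintype.card_coe])).mpr <| by
      rw [transpose_mul_self_submatrix_of_forall_notMem hS, hW]
  ext i j
  by_cases hi : i ∈ S
  · by_cases hj : j ∈ S
    · simpa [V, mul_apply, diagonal_apply, hi, one_apply] using congr_fun₂ hV ⟨i, hi⟩ ⟨j, hj⟩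
    · simp [mul_apply, hS j hj, ne_of_mem_of_not_mem hi hj]
  · simp [mul_apply, hS i hi, diagonal_apply, hi]

lemma trace_transpose_mul_mul_of_mul_transpose_eq_diagonal [Fintype κ] [DecidableEq ι]
    [CommSemiring R] {A : Matrix ι ι R} {W : Matrix ι κ R} {S : Finset ι}
    (h : W * Wᵀ = diagonal fun i => if i ∈ S then 1 else 0) :
    (Wᵀ * A * W).trace = ∑ i ∈ S, A i i := by
  rw [Matrix.mul_assoc, trace_mul_comm, Matrix.mul_assoc, h]
  simp [trace, mul_diagonal, Finset.sum_ite_mem]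

lemma trace_transpose_mul_mul_eq_sum_diag [Fintype κ] [DecidableEq κ] [DecidableEq ι]
    [CommRing R] [Nontrivial R] (A : Matrix ι ι R) {W : Matrix ι κ R} (hW : Wᵀ * W = 1)
    {S : Finset ι} (hS : ∀ i ∉ S, W i = 0) (hcard : #S = Fintype.card κ) :
    (Wᵀ * A * W).trace = ∑ i ∈ S, A i i :=
  trace_transpose_mul_mul_of_mul_transpose_eq_diagonal (mul_transpose_self_eq_diagonal hW hS hcard)

lemma exists_transpose_mul_self_eq_one_of_card_eq [Fintype κ] [DecidableEq κ] [DecidableEq ι]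
    [NonAssocSemiring R] {S : Finset ι} (hcard : #S = Fintype.card κ) :
    ∃ W : Matrix ι κ R, Wᵀ * W = 1 ∧ ∀ i ∉ S, W i = 0 := by
  let e : κ ≃ S := Fintype.equivOfCardEq (by rw [Fintype.card_coe, hcard])
  let f : κ → ι := Subtype.val ∘ e
  refine ⟨(1 : Matrix ι ι R).submatrix id f, ?_, fun i hi => ?_⟩
  · rw [transpose_submatrix, transpose_one]
    simpa [submatrix_one f (Subtype.val_injective.comp e.injective)] using
      one_submatrix_mul f (Equiv.refl ι) ((1 : Matrix ι ι R).submatrix id f)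
  · ext b
    simp [f, (ne_of_mem_of_not_mem (e b).2 hi).symm]

end Matrix

lemma exists_feasible_trace_eq_sum_diag {d m : ℕ} (A : Matrix (Fin d) (Fin d) ℝ)
    {I : Finset (Fin d)} (hI : #I = m) :
    ∃ W, feasible d m m W ∧ (Wᵀ * A * W).trace = ∑ i ∈ I, A i i := by
  obtain ⟨W, hW, hWI⟩ := exists_transpose_mul_self_eq_one_of_card_eq (R := ℝ) (κ := Fin m)
    (hI.trans (Fintype.card_fin m).symm)
  refine ⟨W, ⟨hW, ?_⟩, trace_transpose_mul_mul_eq_sum_diag A hW hWI (by simpa using hI)⟩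
  calc {i | W i ≠ 0}.ncard ≤ (I : Set (Fin d)).ncard :=
        Set.ncard_le_ncard fun i hi => by_contra fun h => hi (hWI i h)
    _ = m := by rw [Set.ncard_coe_finset, hI]

lemma exists_card_eq_trace_eq_sum_diag_of_feasible {d m : ℕ} (A : Matrix (Fin d) (Fin d) ℝ)
    {W : Matrix (Fin d) (Fin m) ℝ} (hW : feasible d m m W) :
    ∃ I : Finset (Fin d), #I = m ∧ (Wᵀ * A * W).trace = ∑ i ∈ I, A i i := by
  classical
  set S := {i | W i ≠ 0}.toFinset
  have hS : ∀ i ∉ S, W i = 0 := by simp [S]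
  have hcard : #S = m :=
    le_antisymm (by rw [← Set.ncard_eq_toFinset_card']; exact hW.2)
      (by simpa using card_le_card_of_transpose_mul_self_eq_one hW.1 hS)
  exact ⟨S, hcard, trace_transpose_mul_mul_eq_sum_diag A hW.1 hS (by simpa using hcard)⟩

theorem fspca_k_eq_m_global_general (d m : ℕ) (hmd : m ≤ d)
    (A : Matrix (Fin d) (Fin d) ℝ) :
    ∃ c : ℝ,
      IsGreatest {x : ℝ | ∃ I : Finset (Fin d), I.card = m ∧ x = ∑ i ∈ I, A i i} c ∧
      IsGreatest {x : ℝ | ∃ W : Matrix (Fin d) (Fin m) ℝ, feasible d m m W ∧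
        x = (Wᵀ * A * W).trace} c := by
  have hvalues : {x : ℝ | ∃ W : Matrix (Fin d) (Fin m) ℝ, feasible d m m W ∧
      x = (Wᵀ * A * W).trace} = {x : ℝ | ∃ I : Finset (Fin d), #I = m ∧ x = ∑ i ∈ I, A i i} := by
    ext x
    constructor
    · rintro ⟨W, hW, rfl⟩
      exact exists_card_eq_trace_eq_sum_diag_of_feasible A hW
    · rintro ⟨I, hI, rfl⟩
      obtain ⟨W, hW, htrace⟩ := exists_feasible_trace_eq_sum_diag A hI
      exact ⟨W, hW, htrace.symm⟩
  simp only [hvalues, and_self]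
  have hne : {I : Finset (Fin d) | #I = m}.Nonempty :=
    (exists_subset_card_eq (s := univ) (by simpa using hmd)).imp fun _ h => h.2
  obtain ⟨I₀, hI₀, hmax⟩ :=
    Set.exists_max_image _ (fun I => ∑ i ∈ I, A i i) (Set.toFinite _) hne
  exact ⟨_, ⟨I₀, hI₀, rfl⟩, by rintro _ ⟨I, hI, rfl⟩; exact hmax I hI⟩

/-- for a PSD matrix `A` (arbitrary rank) and sparsity level `k = m`,
the maximum of `Tr(Wᵀ A W)` over `F(d,m,m)` is attained and equals the sum of the
`m` largest diagonal entries of `A`. -/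
theorem fspca_k_eq_m_global (d m : ℕ) (hd : 0 < d) (hm : 0 < m) (hmd : m ≤ d)
    (A : Matrix (Fin d) (Fin d) ℝ) (hA : A.PosSemidef) :
    ∃ c : ℝ,
      IsGreatest {x : ℝ | ∃ I : Finset (Fin d), I.card = m ∧ x = ∑ i ∈ I, A i i} c ∧
      IsGreatest {x : ℝ | ∃ W : Matrix (Fin d) (Fin m) ℝ, feasible d m m W ∧
        x = (Wᵀ * A * W).trace} c :=
  fspca_k_eq_m_global_general d m hmd A
end

section
/- Let d, m, k be positive integers with m ≤ k ≤ d and d ≥ 2m, let t > 1 and c > 0 be reals, and let A ∈ ℝ^{d×d} be symmetric positive semidefinite with λ_i(A) = c·i^{−t} for each i = 1, …, 2m. Let A_m be the best rank-m approximation of A, let W_m ∈ F(d,m,k) maximize Tr(Wᵀ A_m W) over F(d,m,k), and let W_* ∈ F(d,m,k) maximize Tr(Wᵀ A W) over F(d,m,k). If ε ∈ (0,1] and k ≥ d/(ε · m^{t−1}), then (1 − ε) · Tr(W_*ᵀ A W_*) ≤ Tr(W_mᵀ A W_m) ≤ Tr(W_*ᵀ A W_*). -/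
/-!
Split `A = A_m + R` with `R = ∑_{i > m} λ_i u_i u_iᵀ`. For `W` with orthonormal columns,
`0 ≤ Tr(Wᵀ R W) ≤ m λ_{m+1}`, so `W_m` loses at most `m λ_{m+1} ≤ c m^{1-t}` against `W_*`.
On the other hand `Tr(W_*ᵀ A W_*) ≥ c k / d`: the `k` largest coordinates of `u_1` carry at
least a fraction `k / d` of its mass, and normalising them gives the first column of a feasible
`W`. The hypothesis on `k` says exactly that `c m^{1-t} ≤ ε c k / d`.
-/

open Matrix

open Finset in
theorem Finset.exists_card_eq_mul_sum_le_card_mul_sum {ι : Type*} [Fintype ι] {k : ℕ}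
    (hk : k ≤ Fintype.card ι) (f : ι → ℝ) :
    ∃ S : Finset ι, #S = k ∧ (k : ℝ) * ∑ i, f i ≤ Fintype.card ι * ∑ i ∈ S, f i := by
  classical
  obtain ⟨S, hS, hmax⟩ := exists_max_image (powersetCard k univ) (fun S => ∑ i ∈ S, f i)
    (powersetCard_nonempty.mpr (by simpa using hk))
  have hScard : #S = k := (mem_powersetCard.mp hS).2
  -- swapping `i ∈ S` for `j ∉ S` gives another `k`-subset, so it cannot increase the sum
  have hexchange : ∀ j ∉ S, ∀ i ∈ S, f j ≤ f i := by
    intro j hj i hi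
    have hj' : j ∉ S.erase i := fun h => hj (mem_of_mem_erase h)
    have hswap := hmax (insert j (S.erase i)) <| mem_powersetCard.mpr ⟨subset_univ _, by
      rw [card_insert_of_notMem hj', card_erase_of_mem hi, hScard]
      have := card_pos.mpr ⟨i, hi⟩
      omega⟩
    rw [sum_insert hj', sum_erase_eq_sub hi] at hswap
    linarith
  have hcompl : (k : ℝ) * ∑ j ∈ Sᶜ, f j ≤ (Fintype.card ι - k : ℝ) * ∑ i ∈ S, f i :=
    calc (k : ℝ) * ∑ j ∈ Sᶜ, f j = ∑ j ∈ Sᶜ, ∑ _i ∈ S, f j := by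
          simp [sum_const, hScard, mul_sum]
      _ ≤ ∑ _j ∈ Sᶜ, ∑ i ∈ S, f i :=
          sum_le_sum fun j hj => sum_le_sum fun i hi => hexchange j (mem_compl.mp hj) i hi
      _ = _ := by rw [sum_const, card_compl, hScard, nsmul_eq_mul, Nat.cast_sub hk]
  refine ⟨S, hScard, ?_⟩
  rw [← sum_add_sum_compl S f]
  linear_combination hcompl

theorem Matrix.transpose_mul_self_submatrix_id {R n p q : Type*} [NonAssocSemiring R]
    [Fintype n] [DecidableEq p] [DecidableEq q] {V : Matrix n p R} (hV : Vᵀ * V = 1)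
    {g : q → p} (hg : Function.Injective g) :
    (V.submatrix id g)ᵀ * V.submatrix id g = 1 := by
  rw [transpose_submatrix, ← submatrix_mul _ _ _ _ _ Function.bijective_id, hV,
    submatrix_one _ hg]

theorem Matrix.exists_transpose_mul_self_eq_one_vecMul_apply_sq {n : Type*} [Fintype n]
    [DecidableEq n] (y : n → ℝ) (i₀ : n) :
    ∃ Q : Matrix n n ℝ, Qᵀ * Q = 1 ∧ (y ᵥ* Q) i₀ ^ 2 = y ⬝ᵥ y := by
  by_cases hy : y = 0
  · exact ⟨1, by simp, by simp [hy]⟩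
  set v : EuclideanSpace ℝ n := WithLp.toLp 2 y
  have hv : v ≠ 0 := by simpa [v] using hy
  have hunit : Orthonormal ℝ (({i₀} : Set n).domRestrict fun _ => ‖v‖⁻¹ • v) := by
    refine ⟨fun _ => by simp [norm_smul, hv], fun ⟨i, hi⟩ ⟨j, hj⟩ hij => ?_⟩
    exact absurd (Subtype.ext (hi.trans hj.symm)) hij
  obtain ⟨b, hb⟩ := hunit.exists_orthonormalBasis_extension_of_card_eq (by simp)
  -- the change of basis to an orthonormal basis whose `i₀`-th vector is `y / ‖y‖`
  refine ⟨(EuclideanSpace.basisFun n ℝ).toBasis.toMatrix b, ?_, ?_⟩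
  · simpa using (EuclideanSpace.basisFun n ℝ).toMatrix_orthonormalBasis_conjTranspose_mul_self b
  · have hnorm : ‖v‖ ^ 2 = y ⬝ᵥ y := by
      rw [EuclideanSpace.norm_sq_eq]
      simp [v, dotProduct, sq]
    have hcol : (y ᵥ* (EuclideanSpace.basisFun n ℝ).toBasis.toMatrix b) i₀ = ‖v‖ := by
      simp only [vecMul, dotProduct, Module.Basis.toMatrix_apply, hb i₀ rfl]
      have hv0 : ‖v‖ ≠ 0 := norm_ne_zero_iff.mpr hv
      calc ∑ a, y a * ((EuclideanSpace.basisFun n ℝ).toBasis.repr (‖v‖⁻¹ • v)) a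
          = ‖v‖⁻¹ * ‖v‖ ^ 2 := by
            simp only [hnorm, dotProduct, Finset.mul_sum]
            exact Finset.sum_congr rfl fun a _ => by simp [v]; ring
        _ = ‖v‖ := by field_simp
    rw [hcol, hnorm]

theorem exists_feasible_mul_dotProduct_le {d m k : ℕ} (hm : 0 < m) (hmk : m ≤ k) (hkd : k ≤ d)
    (x : Fin d → ℝ) :
    ∃ W : Matrix (Fin d) (Fin m) ℝ, feasible d m k W ∧
      (k : ℝ) * (x ⬝ᵥ x) ≤ d * ((x ᵥ* W) ⬝ᵥ (x ᵥ* W)) := by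
  obtain ⟨S, hScard, hS⟩ :=
    Finset.exists_card_eq_mul_sum_le_card_mul_sum (by simpa using hkd) fun i => x i * x i
  rw [Fintype.card_fin] at hS
  -- `P` embeds `ℝ^k` as the coordinates in `S`; `W` keeps `m` columns of `P * Q`, one of which
  -- is the normalised restriction of `x` to `S`
  set f := S.orderEmbOfFin hScard
  set P : Matrix (Fin d) (Fin k) ℝ := (1 : Matrix (Fin d) (Fin d) ℝ).submatrix id f
  set y := x ᵥ* P
  have hP : Pᵀ * P = 1 := transpose_mul_self_submatrix_id (by simp) f.injective
  have hy : y ⬝ᵥ y = ∑ i ∈ S, x i * x i := by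
    have hyf : y = x ∘ f := by rw [show y = (x ᵥ* 1) ∘ f from rfl, vecMul_one]
    rw [hyf, ← S.map_orderEmbOfFin_univ hScard, Finset.sum_map]
    rfl
  set i₀ : Fin k := Fin.castLE hmk ⟨0, hm⟩
  obtain ⟨Q, hQ, hyQ⟩ := exists_transpose_mul_self_eq_one_vecMul_apply_sq y i₀
  set W := (P * Q).submatrix id (Fin.castLE hmk)
  have hPQ : (P * Q)ᵀ * (P * Q) = 1 := by
    rw [transpose_mul, Matrix.mul_assoc, ← Matrix.mul_assoc Pᵀ, hP, Matrix.one_mul, hQ]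
  refine ⟨W, ⟨transpose_mul_self_submatrix_id hPQ (Fin.castLE_injective hmk), ?_⟩, ?_⟩
  · have hsupp : {i | W i ≠ 0} ⊆ S := by
      intro i hi
      by_contra hiS
      have hPi : P i = 0 := by
        ext a
        have hne : i ≠ f a := fun h => hiS (h ▸ S.orderEmbOfFin_mem hScard a)
        simp [P, one_apply, hne]
      exact hi (by ext j; simp [W, mul_apply, hPi])
    calc {i | W i ≠ 0}.ncard ≤ (S : Set (Fin d)).ncard := Set.ncard_le_ncard hsupp S.finite_toSet
      _ = k := by rw [Set.ncard_coe_finset, hScard]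
  · have hxW : (x ᵥ* W) ⟨0, hm⟩ = (y ᵥ* Q) i₀ := by
      simp only [W, y, vecMul_vecMul]; rfl
    calc (k : ℝ) * (x ⬝ᵥ x) ≤ d * (y ⬝ᵥ y) := by rw [hy]; exact hS
      _ ≤ d * ((x ᵥ* W) ⬝ᵥ (x ᵥ* W)) := by
        gcongr
        rw [← hyQ, ← hxW, sq]
        exact Finset.single_le_sum (f := fun j => (x ᵥ* W) j * (x ᵥ* W) j)
          (fun j _ => mul_self_nonneg _) (Finset.mem_univ _)

section Spectral

variable {ι n p : Type*} [Fintype n] [Fintype p]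

theorem Matrix.trace_transpose_mul_vecMulVec_self_mul {R : Type*} [CommSemiring R] (x : n → R)
    (W : Matrix n p R) :
    (Wᵀ * vecMulVec x x * W).trace = (x ᵥ* W) ⬝ᵥ (x ᵥ* W) := by
  rw [mul_vecMulVec, vecMulVec_mul, trace_vecMulVec, mulVec_transpose]

variable (u : ι → n → ℝ) (μ : ι → ℝ)

theorem trace_transpose_mul_sum_smul_vecMulVec_mul (T : Finset ι) (W : Matrix n p ℝ) :
    (Wᵀ * (∑ i ∈ T, μ i • vecMulVec (u i) (u i)) * W).trace =
      ∑ i ∈ T, μ i * ((u i ᵥ* W) ⬝ᵥ (u i ᵥ* W)) := by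
  simp only [Matrix.mul_sum, Matrix.sum_mul, trace_sum, Matrix.mul_smul, Matrix.smul_mul,
    trace_smul, trace_transpose_mul_vecMulVec_self_mul, smul_eq_mul]

theorem trace_transpose_mul_sum_smul_vecMulVec_mul_nonneg {T : Finset ι}
    (hμ : ∀ i ∈ T, 0 ≤ μ i) (W : Matrix n p ℝ) :
    0 ≤ (Wᵀ * (∑ i ∈ T, μ i • vecMulVec (u i) (u i)) * W).trace := by
  rw [trace_transpose_mul_sum_smul_vecMulVec_mul]
  exact Finset.sum_nonneg fun i hi => mul_nonneg (hμ i hi) (dotProduct_self_star_nonneg _)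

theorem le_trace_transpose_mul_sum_smul_vecMulVec_mul [Fintype ι] (hμ : ∀ i, 0 ≤ μ i)
    (W : Matrix n p ℝ) (j : ι) :
    μ j * ((u j ᵥ* W) ⬝ᵥ (u j ᵥ* W)) ≤
      (Wᵀ * (∑ i, μ i • vecMulVec (u i) (u i)) * W).trace := by
  rw [trace_transpose_mul_sum_smul_vecMulVec_mul]
  exact Finset.single_le_sum (f := fun i => μ i * ((u i ᵥ* W) ⬝ᵥ (u i ᵥ* W)))
    (fun i _ => mul_nonneg (hμ i) (dotProduct_self_star_nonneg _)) (Finset.mem_univ j)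

end Spectral

section OrthonormalFrame

variable {n p : Type*} [Fintype n] [DecidableEq n] [Fintype p] [DecidableEq p]
  {u : n → n → ℝ} (hu : ∀ i j, u i ⬝ᵥ u j = if i = j then 1 else 0)
include hu

theorem vecMul_sum_smul_vecMulVec_self (μ : n → ℝ) (j : n) :
    u j ᵥ* (∑ i, μ i • vecMulVec (u i) (u i)) = μ j • u j := by
  simp_rw [vecMul_sum, vecMul_smul, vecMul_vecMulVec, hu, ite_smul, one_smul, zero_smul,
    smul_ite, smul_zero, Finset.sum_ite_eq, Finset.mem_univ, if_true]

theorem nonneg_of_posSemidef_sum_smul_vecMulVec {μ : n → ℝ}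
    (hA : (∑ i, μ i • vecMulVec (u i) (u i)).PosSemidef) (j : n) : 0 ≤ μ j := by
  have h := hA.dotProduct_mulVec_nonneg (u j)
  rwa [star_trivial, dotProduct_mulVec, vecMul_sum_smul_vecMulVec_self hu, smul_dotProduct, hu,
    if_pos rfl, smul_eq_mul, mul_one] at h

theorem sum_vecMulVec_self_eq_one : ∑ i, vecMulVec (u i) (u i) = 1 := by
  have hU : of u * (of u)ᵀ = 1 := by
    ext i j
    simpa [mul_apply, one_apply, dotProduct] using hu i j
  rw [← mul_eq_one_comm.mp hU]
  ext a b
  simp [mul_apply, Matrix.sum_apply, vecMulVec_apply]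

theorem sum_dotProduct_vecMul_self_eq_card {W : Matrix n p ℝ} (hW : Wᵀ * W = 1) :
    ∑ i, (u i ᵥ* W) ⬝ᵥ (u i ᵥ* W) = Fintype.card p := by
  simp_rw [← trace_transpose_mul_vecMulVec_self_mul, ← trace_sum, ← Matrix.sum_mul,
    ← Matrix.mul_sum, sum_vecMulVec_self_eq_one hu, Matrix.mul_one, hW, trace_one]

theorem trace_transpose_mul_sum_smul_vecMulVec_mul_le {μ : n → ℝ} {T : Finset n} {b : ℝ}
    (hb : 0 ≤ b) (hμ : ∀ i ∈ T, μ i ≤ b) {W : Matrix n p ℝ} (hW : Wᵀ * W = 1) :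
    (Wᵀ * (∑ i ∈ T, μ i • vecMulVec (u i) (u i)) * W).trace ≤ Fintype.card p * b := by
  rw [trace_transpose_mul_sum_smul_vecMulVec_mul, ← sum_dotProduct_vecMul_self_eq_card hu hW,
    Finset.sum_mul]
  calc ∑ i ∈ T, μ i * ((u i ᵥ* W) ⬝ᵥ (u i ᵥ* W))
      ≤ ∑ i ∈ T, (u i ᵥ* W) ⬝ᵥ (u i ᵥ* W) * b :=
        Finset.sum_le_sum fun i hi => by
          rw [mul_comm]; exact mul_le_mul_of_nonneg_left (hμ i hi) (dotProduct_self_star_nonneg _)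
    _ ≤ ∑ i, (u i ᵥ* W) ⬝ᵥ (u i ᵥ* W) * b :=
        Finset.sum_le_sum_of_subset_of_nonneg (Finset.subset_univ T)
          fun i _ _ => mul_nonneg (dotProduct_self_star_nonneg _) hb

end OrthonormalFrame

theorem exists_feasible_mul_div_le_trace {d m k : ℕ} (hm : 0 < m) (hmk : m ≤ k) (hkd : k ≤ d)
    {u : Fin d → Fin d → ℝ} (hu : ∀ i j, u i ⬝ᵥ u j = if i = j then 1 else 0) {μ : Fin d → ℝ}
    (hμ : ∀ i, 0 ≤ μ i) (j : Fin d) :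
    ∃ W : Matrix (Fin d) (Fin m) ℝ, feasible d m k W ∧
      μ j * (k / d) ≤ (Wᵀ * (∑ i, μ i • vecMulVec (u i) (u i)) * W).trace := by
  obtain ⟨W, hW, hmass⟩ := exists_feasible_mul_dotProduct_le hm hmk hkd (u j)
  rw [hu, if_pos rfl, mul_one, ← div_le_iff₀' (Nat.cast_pos.mpr (by omega))] at hmass
  exact ⟨W, hW, (mul_le_mul_of_nonneg_left hmass (hμ j)).trans
    (le_trace_transpose_mul_sum_smul_vecMulVec_mul u μ hμ W j)⟩

theorem mul_add_one_rpow_neg_le {m t ε d k : ℝ} (hm : 0 < m) (ht : 0 ≤ t) (hε : 0 < ε)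
    (hd : 0 < d) (hk : d / (ε * m ^ (t - 1)) ≤ k) :
    m * (m + 1) ^ (-t) ≤ ε * (k / d) := by
  have hmt : 0 < m ^ (t - 1) := Real.rpow_pos_of_pos hm _
  calc m * (m + 1) ^ (-t) ≤ m * m ^ (-t) :=
        mul_le_mul_of_nonneg_left
          (Real.rpow_le_rpow_of_nonpos hm (by linarith) (neg_nonpos.mpr ht)) hm.le
    _ = (m ^ (t - 1))⁻¹ := by
        rw [Real.rpow_neg hm.le, Real.rpow_sub hm, Real.rpow_one, inv_div, div_eq_mul_inv]
    _ ≤ ε * (k / d) := by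
        rw [div_le_iff₀ (mul_pos hε hmt)] at hk
        rw [inv_le_iff_one_le_mul₀ hmt, mul_right_comm, mul_div_assoc', le_div_iff₀ hd]
        linarith

theorem zipf_approximation_guarantee_general (d m k : ℕ) (hm : 0 < m) (hmk : m ≤ k)
    (hkd : k ≤ d) (h2m : 2 * m ≤ d)
    (t c : ℝ) (ht : 1 < t) (hc : 0 < c)
    (A : Matrix (Fin d) (Fin d) ℝ) (hA : A.PosSemidef)
    (u : Fin d → Fin d → ℝ) (μ : Fin d → ℝ)
    (hu : ∀ i j : Fin d, u i ⬝ᵥ u j = if i = j then 1 else 0)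
    (hμ : Antitone μ)
    (hdec : A = ∑ i : Fin d, μ i • vecMulVec (u i) (u i))
    (hzipf : ∀ i : Fin d, (i : ℕ) < 2 * m → μ i = c * (((i : ℕ) + 1 : ℝ)) ^ (-t))
    (Am : Matrix (Fin d) (Fin d) ℝ)
    (hAm : Am = ∑ i ∈ Finset.univ.filter (fun i : Fin d => (i : ℕ) < m),
      μ i • vecMulVec (u i) (u i))
    (Wm Ws : Matrix (Fin d) (Fin m) ℝ)
    (hWm : feasible d m k Wm) (hWs : feasible d m k Ws)
    (hWmmax : ∀ W : Matrix (Fin d) (Fin m) ℝ, feasible d m k W →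
      (Wᵀ * Am * W).trace ≤ (Wmᵀ * Am * Wm).trace)
    (hWsmax : ∀ W : Matrix (Fin d) (Fin m) ℝ, feasible d m k W →
      (Wᵀ * A * W).trace ≤ (Wsᵀ * A * Ws).trace)
    (ε : ℝ) (hε0 : 0 < ε)
    (hk : (d : ℝ) / (ε * (m : ℝ) ^ (t - 1)) ≤ (k : ℝ)) :
    (1 - ε) * (Wsᵀ * A * Ws).trace ≤ (Wmᵀ * A * Wm).trace ∧
      (Wmᵀ * A * Wm).trace ≤ (Wsᵀ * A * Ws).trace := by
  have hμ_nonneg := nonneg_of_posSemidef_sum_smul_vecMulVec hu (hdec ▸ hA)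
  set R := ∑ i ∈ Finset.univ.filter (fun i : Fin d => ¬ (i : ℕ) < m), μ i • vecMulVec (u i) (u i)
  have hsplit (W : Matrix (Fin d) (Fin m) ℝ) :
      (Wᵀ * A * W).trace = (Wᵀ * Am * W).trace + (Wᵀ * R * W).trace := by
    rw [← trace_add, ← Matrix.add_mul, ← Matrix.mul_add, hdec, hAm,
      Finset.sum_filter_add_sum_filter_not]
  let i₀ : Fin d := ⟨0, by omega⟩
  let iₘ : Fin d := ⟨m, by omega⟩
  have hμ₀ : μ i₀ = c := by simpa using hzipf i₀ (by simp [i₀]; omega)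
  have hμₘ : μ iₘ = c * ((m : ℝ) + 1) ^ (-t) := hzipf iₘ (by simp [iₘ]; omega)
  have hR_nonneg : 0 ≤ (Wmᵀ * R * Wm).trace :=
    trace_transpose_mul_sum_smul_vecMulVec_mul_nonneg u μ (fun i _ => hμ_nonneg i) Wm
  have hR_le : (Wsᵀ * R * Ws).trace ≤ m * μ iₘ := by
    simpa using trace_transpose_mul_sum_smul_vecMulVec_mul_le hu (hμ_nonneg iₘ)
      (fun i hi => hμ (Fin.le_def.mpr (show m ≤ (i : ℕ) by simpa using hi))) hWs.1
  obtain ⟨W₀, hW₀, hW₀_trace⟩ := exists_feasible_mul_div_le_trace hm hmk hkd hu hμ_nonneg i₀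
  have hlower : c * (k / d) ≤ (Wsᵀ * A * Ws).trace :=
    (hμ₀ ▸ hdec ▸ hW₀_trace).trans (hWsmax W₀ hW₀)
  have htail : m * μ iₘ ≤ ε * (c * (k / d)) := by
    rw [hμₘ, mul_left_comm, mul_left_comm ε]
    exact mul_le_mul_of_nonneg_left
      (mul_add_one_rpow_neg_le (by positivity) (by linarith) hε0
        (Nat.cast_pos.mpr (by omega)) hk) hc.le
  have hR_small : (Wsᵀ * R * Ws).trace ≤ ε * (Wsᵀ * A * Ws).trace :=
    hR_le.trans (htail.trans (mul_le_mul_of_nonneg_left hlower hε0.le))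
  refine ⟨?_, hWsmax Wm hWm⟩
  linarith [hsplit Wm, hsplit Ws, hWmmax Ws hWs]

/-- Zipf-like spectrum: given a spectral decomposition
`A = ∑ᵢ μᵢ uᵢ uᵢᵀ` (orthonormal `u`, non-increasing `μ`, so `μᵢ = λᵢ(A)`) with
`λᵢ(A) = c·i^{-t}` for `i = 1, …, 2m` (`t > 1`, `c > 0`), let `Am` be the best
rank-`m` approximation, `Wm` a maximizer of `Tr(Wᵀ Am W)` over `F(d,m,k)` and
`Ws` a maximizer of `Tr(Wᵀ A W)` over `F(d,m,k)`. If `ε ∈ (0,1]` and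
`k ≥ d/(ε·m^{t-1})` then `(1-ε)·Tr(Wsᵀ A Ws) ≤ Tr(Wmᵀ A Wm) ≤ Tr(Wsᵀ A Ws)`. -/
theorem zipf_approximation_guarantee (d m k : ℕ) (hm : 0 < m) (hmk : m ≤ k)
    (hkd : k ≤ d) (h2m : 2 * m ≤ d)
    (t c : ℝ) (ht : 1 < t) (hc : 0 < c)
    (A : Matrix (Fin d) (Fin d) ℝ) (hA : A.PosSemidef)
    (u : Fin d → Fin d → ℝ) (μ : Fin d → ℝ)
    (hu : ∀ i j : Fin d, u i ⬝ᵥ u j = if i = j then 1 else 0)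
    (hμ : Antitone μ)
    (hdec : A = ∑ i : Fin d, μ i • vecMulVec (u i) (u i))
    (hzipf : ∀ i : Fin d, (i : ℕ) < 2 * m → μ i = c * (((i : ℕ) + 1 : ℝ)) ^ (-t))
    (Am : Matrix (Fin d) (Fin d) ℝ)
    (hAm : Am = ∑ i ∈ Finset.univ.filter (fun i : Fin d => (i : ℕ) < m),
      μ i • vecMulVec (u i) (u i))
    (Wm Ws : Matrix (Fin d) (Fin m) ℝ)
    (hWm : feasible d m k Wm) (hWs : feasible d m k Ws)
    (hWmmax : ∀ W : Matrix (Fin d) (Fin m) ℝ, feasible d m k W →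
      (Wᵀ * Am * W).trace ≤ (Wmᵀ * Am * Wm).trace)
    (hWsmax : ∀ W : Matrix (Fin d) (Fin m) ℝ, feasible d m k W →
      (Wᵀ * A * W).trace ≤ (Wsᵀ * A * Ws).trace)
    (ε : ℝ) (hε0 : 0 < ε) (hε1 : ε ≤ 1)
    (hk : (d : ℝ) / (ε * (m : ℝ) ^ (t - 1)) ≤ (k : ℝ)) :
    (1 - ε) * (Wsᵀ * A * Ws).trace ≤ (Wmᵀ * A * Wm).trace ∧
      (Wmᵀ * A * Wm).trace ≤ (Wsᵀ * A * Ws).trace :=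
  zipf_approximation_guarantee_general d m k hm hmk hkd h2m t c ht hc A hA u μ hu hμ hdec hzipf Am
    hAm Wm Ws hWm hWs hWmmax hWsmax ε hε0 hk
end
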